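/- For every natural number k ≥ 0, arctan(L_{2k+1}/2) − 2·arctan(φ^{2k+1}) = −π/2. -/

import Mathlib

open Real

/-- The Lucas numbers: `L 0 = 2`, `L 1 = 1`, `L (n+2) = L (n+1) + L n`. -/
def L : ℕ → ℝ
  | 0 => 2
  | 1 => 1
  | (n + 2) => L (n + 1) + L n

/-- The golden ratio `φ = (1 + √5)/2`. -/
noncomputable def phi : ℝ := (1 + Real.sqrt 5) / 2

/-!
Since `ψ = -φ⁻¹`, Binet's formula gives `L n = x - x⁻¹` with `x = φ ^ n` for odd `n`. For `x > 0`,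
the addition formula for `arctan` at `x` and `-x⁻¹` (whose product is `-1`) together with
`arctan x⁻¹ = π / 2 - arctan x` yields `arctan ((x - x⁻¹) / 2) = 2 * arctan x - π / 2`.
-/

open scoped goldenRatio

theorem phi_eq_goldenRatio : phi = φ := rfl

theorem L_eq_goldenRatio_pow_add_goldenConj_pow : ∀ n : ℕ, L n = φ ^ n + ψ ^ n
  | 0 => by norm_num [L]
  | 1 => by simp [L, goldenRatio_add_goldenConj]
  | n + 2 => by
    rw [L, L_eq_goldenRatio_pow_add_goldenConj_pow (n + 1),
      L_eq_goldenRatio_pow_add_goldenConj_pow n]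
    linear_combination -(φ ^ n * goldenRatio_sq) - ψ ^ n * goldenConj_sq

theorem goldenConj_pow_of_odd {n : ℕ} (hn : Odd n) : ψ ^ n = -(φ ^ n)⁻¹ := by
  rw [← neg_neg ψ, ← inv_goldenRatio, hn.neg_pow, inv_pow]

theorem arctan_sub_inv_div_two {x : ℝ} (hx : 0 < x) :
    arctan ((x - x⁻¹) / 2) = 2 * arctan x - π / 2 := by
  have hprod : x * -x⁻¹ = -1 := by field_simp
  calc arctan ((x - x⁻¹) / 2) = arctan x + arctan (-x⁻¹) := by
        rw [arctan_add (by linarith), hprod]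
        norm_num [sub_eq_add_neg]
    _ = 2 * arctan x - π / 2 := by
        rw [arctan_neg, arctan_inv_of_pos hx]
        ring

theorem arctan_lucas_sub_two_arctan_phi (k : ℕ) :
    arctan (L (2 * k + 1) / 2) - 2 * arctan (phi ^ (2 * k + 1)) = -(π / 2) := by
  rw [L_eq_goldenRatio_pow_add_goldenConj_pow, goldenConj_pow_of_odd (odd_two_mul_add_one k),
    ← sub_eq_add_neg, arctan_sub_inv_div_two (pow_pos goldenRatio_pos _), phi_eq_goldenRatio]
  ring
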